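/- Let b ∈ Δ_d^{>0} and suppose θ in the open simplex solves the Risk Budgeting equations θᵢ∂ᵢR(θ) = bᵢR(θ) for all i. Then there exists λ̄ > 0 such that λ̄θ is a critical point of Γ_g, and hence λ̄θ = y*, the unique minimizer of Γ_g; consequently the Risk Budgeting problem RB_b has at most one solution in the open simplex. -/

import Mathlib

/-!
Let `L = dR(θ)`. Summing the Risk Budgeting equations gives Euler's identity `L θ = R θ`, and
convexity of `R` then gives `L z ≤ R z` on the orthant. Choose `t > 0` with `t g'(t) = 1` and put
`y = (t / R θ) θ`, so that `R y = t` and `L z = t ∑ bᵢ zᵢ / yᵢ`. The tangent-line inequality for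
`g` at `t` and `log u ≤ u - 1` give `Γ_g z - Γ_g y ≥ (R z - L z) / t ≥ 0`, so `y` minimizes the
strictly convex `Γ_g` and equals `y*`. Two solutions on the simplex are then multiples of the
same `y*`, hence equal.
-/

open Set Real

theorem ConvexOn.mul_sub_le_of_hasDerivAt {S : Set ℝ} {f : ℝ → ℝ} {f' x y : ℝ}
    (hf : ConvexOn ℝ S f) (hx : x ∈ S) (hy : y ∈ S) (hfx : HasDerivAt f f' x) :
    f' * (y - x) ≤ f y - f x := by
  rcases lt_trichotomy x y with hxy | rfl | hxy
  · have h := hf.le_slope_of_hasDerivAt hx hy hxy hfx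
    rwa [slope_def_field, le_div_iff₀ (sub_pos.2 hxy)] at h
  · simp
  · have h := hf.slope_le_of_hasDerivAt hy hx hxy hfx
    rw [slope_def_field, div_le_iff₀ (sub_pos.2 hxy)] at h
    linarith

theorem ConvexOn.apply_sub_le_of_hasFDerivAt {E : Type*} [NormedAddCommGroup E]
    [NormedSpace ℝ E] {s : Set E} {f : E → ℝ} {f' : E →L[ℝ] ℝ} {x y : E}
    (hf : ConvexOn ℝ s f) (hx : x ∈ s) (hy : y ∈ s) (hfx : HasFDerivAt f f' x) :
    f' (y - x) ≤ f y - f x := by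
  have hline : ConvexOn ℝ (AffineMap.lineMap (k := ℝ) x y ⁻¹' s)
      (f ∘ AffineMap.lineMap (k := ℝ) x y) :=
    hf.comp_affineMap _
  have hderiv : HasDerivAt (f ∘ AffineMap.lineMap (k := ℝ) x y) (f' (y - x)) 0 := by
    rw [← AffineMap.lineMap_apply_zero x y (k := ℝ)] at hfx
    exact hfx.comp_hasDerivAt 0 AffineMap.hasDerivAt_lineMap
  simpa using hline.mul_sub_le_of_hasDerivAt (x := 0) (y := 1) (by simpa using hx)
    (by simpa using hy) hderiv

theorem ConvexOn.comp_of_mapsTo {E : Type*} [AddCommGroup E] [Module ℝ E] {s : Set E}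
    {S : Set ℝ} {f : E → ℝ} {g : ℝ → ℝ} (hg : ConvexOn ℝ S g) (hf : ConvexOn ℝ s f)
    (hg' : MonotoneOn g S) (hfS : MapsTo f s S) : ConvexOn ℝ s (g ∘ f) :=
  ⟨hf.1, fun _ hx _ hy _ _ ha hb hab =>
    (hg' (hfS (hf.1 hx hy ha hb hab)) (hg.1 (hfS hx) (hfS hy) ha hb hab)
      (hf.2 hx hy ha hb hab)).trans (hg.2 (hfS hx) (hfS hy) ha hb hab)⟩

theorem exists_hasDerivAt_inv_self {g : ℝ → ℝ} (hg : ContDiffOn ℝ 1 g (Ioi 0))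
    (hgconv : ConvexOn ℝ (Ioi 0) g) (hgmono : StrictMonoOn g (Ioi 0)) :
    ∃ t, 0 < t ∧ HasDerivAt g t⁻¹ t := by
  have hdiff : ∀ x ∈ Ioi (0 : ℝ), DifferentiableAt ℝ g x := fun x hx =>
    (hg.differentiableOn one_ne_zero x hx).differentiableAt (Ioi_mem_nhds hx)
  have hmono := hgconv.monotoneOn_deriv hdiff
  have hmem₁ : (1 : ℝ) ∈ Ioi 0 := mem_Ioi.2 one_pos
  have hmem₂ : (2 : ℝ) ∈ Ioi 0 := mem_Ioi.2 two_pos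
  set c := g 2 - g 1
  have hc : 0 < c := sub_pos.2 (hgmono hmem₁ hmem₂ one_lt_two)
  have hc₁ : deriv g 1 ≤ c := by
    simpa [slope_def_field, c, show (2 : ℝ) - 1 = 1 by norm_num] using
      hgconv.deriv_le_slope hmem₁ hmem₂ one_lt_two (hdiff 1 hmem₁)
  have hc₂ : c ≤ deriv g 2 := by
    simpa [slope_def_field, c, show (2 : ℝ) - 1 = 1 by norm_num] using
      hgconv.slope_le_deriv hmem₁ hmem₂ one_lt_two (hdiff 2 hmem₂)
  -- `g'` lies below the chord slope `c` on `(0, 1]` and above it on `[2, ∞)`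
  set t₀ := min 1 (1 / (2 * c))
  set T := max 2 (2 / c)
  have ht₀ : 0 < t₀ := by positivity
  have hT : 0 < T := by positivity
  have ht₀T : t₀ ≤ T := (min_le_left _ _).trans (one_le_two.trans (le_max_left _ _))
  have hlo : t₀ * deriv g t₀ ≤ 1 := calc
    t₀ * deriv g t₀ ≤ t₀ * c :=
      mul_le_mul_of_nonneg_left ((hmono ht₀ hmem₁ (min_le_left _ _)).trans hc₁) ht₀.le
    _ ≤ 1 / (2 * c) * c := mul_le_mul_of_nonneg_right (min_le_right _ _) hc.le
    _ ≤ 1 := by field_simp; norm_num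
  have hhi : 1 ≤ T * deriv g T := calc
    (1 : ℝ) ≤ 2 / c * c := by field_simp; norm_num
    _ ≤ T * c := mul_le_mul_of_nonneg_right (le_max_right _ _) hc.le
    _ ≤ T * deriv g T :=
      mul_le_mul_of_nonneg_left (hc₂.trans (hmono hmem₂ hT (le_max_left _ _))) hT.le
  have hcont : ContinuousOn (fun t => t * deriv g t) (Icc t₀ T) :=
    continuousOn_id.mul ((hg.continuousOn_deriv_of_isOpen isOpen_Ioi le_rfl).mono
      fun x hx => ht₀.trans_le hx.1)
  obtain ⟨t, ht, htg⟩ := intermediate_value_Icc ht₀T hcont ⟨hlo, hhi⟩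
  have htpos : 0 < t := ht₀.trans_le ht.1
  refine ⟨t, htpos, ?_⟩
  rw [← eq_inv_of_mul_eq_one_right htg]
  exact (hdiff t htpos).hasDerivAt

section RiskBudgeting

variable {ι : Type*}

def posOrthant (ι : Type*) : Set (ι → ℝ) := {y | ∀ i, 0 < y i}

theorem isOpen_posOrthant [Finite ι] : IsOpen (posOrthant ι) := by
  have h : posOrthant ι = ⋂ i, {y | 0 < y i} := by ext; simp [posOrthant]
  rw [h]
  exact isOpen_iInter_of_finite fun i => isOpen_lt continuous_const (continuous_apply i)

theorem convex_posOrthant : Convex ℝ (posOrthant ι) :=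
  fun _ hx _ hy _ _ ha hb hab i => convex_Ioi (0 : ℝ) (hx i) (hy i) ha hb hab

variable [Fintype ι]

theorem pos_of_mem_posOrthant [Nonempty ι] {R : (ι → ℝ) → ℝ}
    (hRhom : ∀ y : ι → ℝ, (∀ i, 0 ≤ y i) → ∀ l : ℝ, 0 ≤ l →
      R (fun i => l * y i) = l * R y)
    (hRpos : ∀ y : ι → ℝ, (∀ i, 0 ≤ y i) → ∑ i, y i = 1 → 0 < R y)
    {z : ι → ℝ} (hz : z ∈ posOrthant ι) : 0 < R z := by
  set s := ∑ i, z i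
  have hs : 0 < s := Finset.sum_pos (fun i _ => hz i) Finset.univ_nonempty
  have hnorm : 0 < R fun i => s⁻¹ * z i :=
    hRpos _ (fun i => by have := hz i; positivity)
      (by rw [← Finset.mul_sum, inv_mul_cancel₀ hs.ne'])
  have hz' : z = fun i => s * (s⁻¹ * z i) := by ext i; field_simp
  rw [hz', hRhom _ (fun i => by have := hz i; positivity) s hs.le]
  positivity

theorem ContinuousLinearMap.apply_eq_sum_mul_single [DecidableEq ι] (L : (ι → ℝ) →L[ℝ] ℝ)
    (z : ι → ℝ) :
    L z = ∑ i, z i * L (Pi.single i 1) := by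
  conv_lhs => rw [pi_eq_sum_univ' z, map_sum]
  simp only [map_smul, smul_eq_mul]

theorem strictConcaveOn_sum_mul_log {b : ι → ℝ} (hb : ∀ i, 0 < b i) :
    StrictConcaveOn ℝ (posOrthant ι) fun y => ∑ i, b i * log (y i) := by
  refine ⟨convex_posOrthant, fun x hx y hy hxy a c ha hc hac => ?_⟩
  obtain ⟨j, hj⟩ := Function.ne_iff.1 hxy
  have hlog := strictConcaveOn_log_Ioi
  simp only [smul_eq_mul, Finset.mul_sum, ← Finset.sum_add_distrib, Pi.add_apply, Pi.smul_apply]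
  refine Finset.sum_lt_sum (fun i _ => ?_) ⟨j, Finset.mem_univ _, ?_⟩
  · have h := hlog.concaveOn.2 (hx i) (hy i) ha.le hc.le hac
    simp only [smul_eq_mul] at h
    nlinarith [hb i]
  · have h := hlog.2 (hx j) (hy j) hj ha hc hac
    simp only [smul_eq_mul] at h
    nlinarith [hb j]

/-- The objective `Γ_g` of the paper. -/
noncomputable def riskBudgetingObjective (g : ℝ → ℝ) (R : (ι → ℝ) → ℝ) (b y : ι → ℝ) : ℝ :=
  g (R y) - ∑ i, b i * log (y i)

theorem strictConvexOn_riskBudgetingObjective {g : ℝ → ℝ} {R : (ι → ℝ) → ℝ} {b : ι → ℝ}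
    (hgconv : ConvexOn ℝ (Ici 0) g) (hgmono : MonotoneOn g (Ici 0))
    (hRconv : ConvexOn ℝ (posOrthant ι) R) (hRnonneg : ∀ y ∈ posOrthant ι, 0 ≤ R y)
    (hb : ∀ i, 0 < b i) :
    StrictConvexOn ℝ (posOrthant ι) (riskBudgetingObjective g R b) :=
  (hgconv.comp_of_mapsTo hRconv hgmono hRnonneg).sub_strictConcaveOn
    (strictConcaveOn_sum_mul_log hb)

theorem eq_of_mul_eq_mul_of_sum_eq_one {x y : ι → ℝ} {a c : ℝ}
    (ha : a ≠ 0) (hx : ∑ i, x i = 1) (hy : ∑ i, y i = 1)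
    (h : (fun i => a * x i) = fun i => c * y i) : x = y := by
  have hac : a = c := by
    simpa [← Finset.mul_sum, hx, hy] using congrArg (fun v => ∑ i, v i) h
  subst hac
  funext i
  exact mul_left_cancel₀ ha (congrFun h i)

variable [DecidableEq ι]

theorem isMinOn_riskBudgetingObjective_of_riskBudgeting {g : ℝ → ℝ} {R : (ι → ℝ) → ℝ}
    {b θ : ι → ℝ} {L : (ι → ℝ) →L[ℝ] ℝ} {t : ℝ}
    (hgconv : ConvexOn ℝ (Ioi 0) g) (ht : 0 < t) (hgt : HasDerivAt g t⁻¹ t)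
    (hRconv : ConvexOn ℝ (posOrthant ι) R)
    (hRhom : ∀ y : ι → ℝ, (∀ i, 0 ≤ y i) → ∀ l : ℝ, 0 ≤ l →
      R (fun i => l * y i) = l * R y)
    (hRpos : ∀ y ∈ posOrthant ι, 0 < R y)
    (hb : ∀ i, 0 ≤ b i) (hbsum : ∑ i, b i = 1)
    (hθ : θ ∈ posOrthant ι) (hL : HasFDerivAt R L θ)
    (hθRB : ∀ i, θ i * L (Pi.single i 1) = b i * R θ) :
    IsMinOn (riskBudgetingObjective g R b) (posOrthant ι) fun i => t / R θ * θ i := by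
  set y : ι → ℝ := fun i => t / R θ * θ i with hy_def
  have hRθ := hRpos θ hθ
  have hy : ∀ i, 0 < y i := fun i => by have := hθ i; positivity
  have hRy : R y = t := by
    rw [hy_def, hRhom θ (fun i => (hθ i).le) _ (by positivity)]
    field_simp
  have hEuler : L θ = R θ := by
    rw [L.apply_eq_sum_mul_single, Finset.sum_congr rfl fun i _ => hθRB i, ← Finset.sum_mul,
      hbsum, one_mul]
  -- the RB equations say `∂ᵢR(θ) = t bᵢ / yᵢ`
  have hLy : ∀ z, t⁻¹ * L z = ∑ i, b i * (z i / y i) := by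
    intro z
    rw [L.apply_eq_sum_mul_single, Finset.mul_sum]
    refine Finset.sum_congr rfl fun i _ => ?_
    have hLi : L (Pi.single i 1) = b i * R θ / θ i := by
      rw [eq_div_iff (hθ i).ne', mul_comm, hθRB i]
    have := hθ i
    rw [hLi, hy_def]
    field_simp
  rw [isMinOn_iff]
  intro z hz
  have hRz := hRpos z hz
  have hg_tangent : t⁻¹ * (R z - t) ≤ g (R z) - g t :=
    hgconv.mul_sub_le_of_hasDerivAt ht hRz hgt
  have hR_tangent : L z ≤ R z := by
    have := hRconv.apply_sub_le_of_hasFDerivAt hθ hz hL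
    rw [map_sub, hEuler] at this
    linarith
  have hlog : ∑ i, b i * (log (z i) - log (y i)) ≤ ∑ i, b i * (z i / y i - 1) :=
    Finset.sum_le_sum fun i _ => mul_le_mul_of_nonneg_left (by
      rw [← log_div (hz i).ne' (hy i).ne']
      exact log_le_sub_one_of_pos (div_pos (hz i) (hy i))) (hb i)
  suffices ∑ i, b i * (log (z i) - log (y i)) ≤ g (R z) - g (R y) by
    simp only [riskBudgetingObjective, mul_sub, Finset.sum_sub_distrib] at this ⊢
    linarith
  calc ∑ i, b i * (log (z i) - log (y i))
      ≤ ∑ i, b i * (z i / y i - 1) := hlog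
    _ = t⁻¹ * L z - 1 := by simp only [mul_sub, Finset.sum_sub_distrib, hLy, mul_one, hbsum]
    _ ≤ t⁻¹ * (R z - t) := by
      rw [mul_sub, inv_mul_cancel₀ ht.ne']
      gcongr
    _ ≤ g (R z) - g (R y) := hRy ▸ hg_tangent

end RiskBudgeting

theorem RB_solution_unique_general {d : ℕ} (hd : 0 < d)
    (R : (Fin d → ℝ) → ℝ)
    (hRdiff : ContDiffOn ℝ 1 R {y : Fin d → ℝ | ∀ i, 0 < y i})
    (hRconv : ConvexOn ℝ {y : Fin d → ℝ | ∀ i, 0 ≤ y i} R)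
    (hRhom : ∀ (y : Fin d → ℝ), (∀ i, 0 ≤ y i) → ∀ l : ℝ, 0 ≤ l →
      R (fun i => l * y i) = l * R y)
    (hRpos : ∀ y : Fin d → ℝ, (∀ i, 0 ≤ y i) → (∑ i, y i) = 1 → 0 < R y)
    (b : Fin d → ℝ) (hb : ∀ i, 0 < b i) (hbsum : ∑ i, b i = 1)
    (g : ℝ → ℝ) (hg : ContDiffOn ℝ 1 g (Set.Ici 0))
    (hgconv : ConvexOn ℝ (Set.Ici 0) g) (hgmono : StrictMonoOn g (Set.Ici 0))
    (θ : Fin d → ℝ) (hθ : ∀ i, 0 < θ i) (hθsum : ∑ i, θ i = 1)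
    (hθRB : ∀ i, θ i * fderiv ℝ R θ (Pi.single i 1) = b i * R θ)
    (ystar : Fin d → ℝ) (hystar : ∀ i, 0 < ystar i)
    (hmin : ∀ z : Fin d → ℝ, (∀ i, 0 < z i) →
      g (R ystar) - ∑ i, b i * Real.log (ystar i) ≤ g (R z) - ∑ i, b i * Real.log (z i)) :
    (∃ l : ℝ, 0 < l ∧ ystar = fun i => l * θ i) ∧
    ∀ θ' : Fin d → ℝ, (∀ i, 0 < θ' i) → (∑ i, θ' i = 1) →
      (∀ i, θ' i * fderiv ℝ R θ' (Pi.single i 1) = b i * R θ') → θ' = θ := by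
  have : Nonempty (Fin d) := ⟨⟨0, hd⟩⟩
  have hRpos' : ∀ y ∈ posOrthant (Fin d), 0 < R y := fun _ hy =>
    pos_of_mem_posOrthant hRhom hRpos hy
  have hRconv' : ConvexOn ℝ (posOrthant (Fin d)) R :=
    hRconv.subset (fun _ hy i => (hy i).le) convex_posOrthant
  have hgconv' := hgconv.subset Ioi_subset_Ici_self (convex_Ioi 0)
  obtain ⟨t, ht, hgt⟩ := exists_hasDerivAt_inv_self (hg.mono Ioi_subset_Ici_self) hgconv'
    (hgmono.mono Ioi_subset_Ici_self)
  have hΓ := strictConvexOn_riskBudgetingObjective hgconv hgmono.monotoneOn hRconv'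
    (fun y hy => (hRpos' y hy).le) hb
  have hystar_eq : ∀ θ' ∈ posOrthant (Fin d),
      (∀ i, θ' i * fderiv ℝ R θ' (Pi.single i 1) = b i * R θ') →
      ystar = fun i => t / R θ' * θ' i := by
    intro θ' hθ' hθ'RB
    have hL : HasFDerivAt R (fderiv ℝ R θ') θ' :=
      ((hRdiff.differentiableOn one_ne_zero θ' hθ').differentiableAt
        (isOpen_posOrthant.mem_nhds hθ')).hasFDerivAt
    have hRθ' := hRpos' θ' hθ'
    exact hΓ.eq_of_isMinOn (isMinOn_iff.2 hmin)
      (isMinOn_riskBudgetingObjective_of_riskBudgeting hgconv' ht hgt hRconv' hRhom hRpos'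
        (fun i => (hb i).le) hbsum hθ' hL hθ'RB)
      hystar fun i => by have := hθ' i; positivity
  refine ⟨⟨t / R θ, div_pos ht (hRpos' θ hθ), hystar_eq θ hθ hθRB⟩,
    fun θ' hθ' hθ'sum hθ'RB => ?_⟩
  exact eq_of_mul_eq_mul_of_sum_eq_one (div_pos ht (hRpos' θ' hθ')).ne' hθ'sum hθsum
    ((hystar_eq θ' hθ' hθ'RB).symm.trans (hystar_eq θ hθ hθRB))

/-- Uniqueness of the Risk Budgeting portfolio: any solution `θ` of `RB_b` in the open
simplex is, up to a positive scaling factor `λ̄`, the unique minimizer `y*` of `Γ_g`;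
consequently `RB_b` has at most one solution in the open simplex. -/
theorem RB_solution_unique {d : ℕ} (hd : 0 < d)
    (R : (Fin d → ℝ) → ℝ)
    (hRcont : ContinuousOn R {y : Fin d → ℝ | ∀ i, 0 ≤ y i})
    (hRdiff : ContDiffOn ℝ 1 R {y : Fin d → ℝ | ∀ i, 0 < y i})
    (hRconv : ConvexOn ℝ {y : Fin d → ℝ | ∀ i, 0 ≤ y i} R)
    (hRhom : ∀ (y : Fin d → ℝ), (∀ i, 0 ≤ y i) → ∀ l : ℝ, 0 ≤ l →
      R (fun i => l * y i) = l * R y)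
    (hRpos : ∀ y : Fin d → ℝ, (∀ i, 0 ≤ y i) → (∑ i, y i) = 1 → 0 < R y)
    (b : Fin d → ℝ) (hb : ∀ i, 0 < b i) (hbsum : ∑ i, b i = 1)
    (g : ℝ → ℝ) (hg : ContDiffOn ℝ 1 g (Set.Ici 0))
    (hgconv : ConvexOn ℝ (Set.Ici 0) g) (hgmono : StrictMonoOn g (Set.Ici 0))
    (θ : Fin d → ℝ) (hθ : ∀ i, 0 < θ i) (hθsum : ∑ i, θ i = 1)
    (hθRB : ∀ i, θ i * fderiv ℝ R θ (Pi.single i 1) = b i * R θ)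
    (ystar : Fin d → ℝ) (hystar : ∀ i, 0 < ystar i)
    (hmin : ∀ z : Fin d → ℝ, (∀ i, 0 < z i) →
      g (R ystar) - ∑ i, b i * Real.log (ystar i) ≤ g (R z) - ∑ i, b i * Real.log (z i)) :
    (∃ l : ℝ, 0 < l ∧ ystar = fun i => l * θ i) ∧
    ∀ θ' : Fin d → ℝ, (∀ i, 0 < θ' i) → (∑ i, θ' i = 1) →
      (∀ i, θ' i * fderiv ℝ R θ' (Pi.single i 1) = b i * R θ') → θ' = θ :=
  RB_solution_unique_general hd R hRdiff hRconv hRhom hRpos b hb hbsum g hg hgconv hgmono θ hθ hθsum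
    hθRB ystar hystar hmin
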